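/- arXiv:1408.3469 — 10 statements merged into one kernel-verified Lean document; each statement's English description precedes it below -/
import Mathlib

section
/- Let n ≥ 2 and suppose x ∈ ℝ_{≥0}^n satisfies ∑_{i=1}^n √(x_i) ≤ 1. Define p_i = √(x_i). Then for every i, x_i ≤ p_i ∏_{j ≠ i} (1 - p_j). -/
lemma weierstrass {α : Type*} (s : Finset α) (f : α → ℝ) (hf : ∀ a ∈ s, 0 ≤ f a) (hf1 : ∀ a ∈ s, f a ≤ 1) :
    1 - ∑ a ∈ s, f a ≤ ∏ a ∈ s, (1 - f a) := by
  induction s using Finset.cons_induction with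
  | empty => simp
  | cons a s ha ih =>
    rw [Finset.sum_cons, Finset.prod_cons]
    have h1 : 0 ≤ f a := hf a (Finset.mem_cons_self a s)
    have h1' : f a ≤ 1 := hf1 a (Finset.mem_cons_self a s)
    have h2 : ∀ b ∈ s, 0 ≤ f b := fun b hb => hf b (Finset.mem_cons_of_mem hb)
    have h2' : ∀ b ∈ s, f b ≤ 1 := fun b hb => hf1 b (Finset.mem_cons_of_mem hb)
    have ih' := ih h2 h2'
    have hs : 0 ≤ ∑ b ∈ s, f b := Finset.sum_nonneg h2
    nlinarith [ih', mul_le_mul_of_nonneg_left ih' (by linarith : (0:ℝ) ≤ 1 - f a)]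

theorem sqrt_control_stabilizes (n : ℕ) (hn : 2 ≤ n) (x : Fin n → ℝ)
    (hx : ∀ i, 0 ≤ x i) (hsum : ∑ i, Real.sqrt (x i) ≤ 1) :
    ∀ i, x i ≤ Real.sqrt (x i) * ∏ j ∈ Finset.univ.erase i, (1 - Real.sqrt (x j)) := by
  intro i
  have hxi : x i = Real.sqrt (x i) * Real.sqrt (x i) :=
    (Real.mul_self_sqrt (hx i)).symm
  nth_rewrite 1 [hxi]
  apply mul_le_mul_of_nonneg_left _ (Real.sqrt_nonneg _)
  have key : Real.sqrt (x i) ≤ 1 - ∑ j ∈ Finset.univ.erase i, Real.sqrt (x j) := by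
    have : Real.sqrt (x i) + ∑ j ∈ Finset.univ.erase i, Real.sqrt (x j) =
        ∑ j, Real.sqrt (x j) := by
      exact Finset.add_sum_erase _ (fun j => Real.sqrt (x j)) (Finset.mem_univ i)
    linarith
  calc Real.sqrt (x i) ≤ 1 - ∑ j ∈ Finset.univ.erase i, Real.sqrt (x j) := key
    _ ≤ _ := by
        apply weierstrass _ _ (fun a _ => Real.sqrt_nonneg _)
        intro a _
        calc Real.sqrt (x a) ≤ ∑ j, Real.sqrt (x j) :=
              Finset.single_le_sum (fun j _ => Real.sqrt_nonneg _) (Finset.mem_univ a)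
          _ ≤ 1 := hsum
end

section
/- Fix n ≥ 2, x ∈ [0,1]^n with x not equal to any standard basis vector e_i, and suppose δ > 0 satisfies ∏_{i=1}^n (1 + x_i δ) = δ. Define p_i = δ x_i / (1 + δ x_i). Then for every i, x_i = p_i ∏_{j ≠ i} (1 - p_j). -/
theorem root_gives_critical_control (n : ℕ) (hn : 2 ≤ n) (x : Fin n → ℝ)
    (hx : ∀ i, x i ∈ Set.Icc (0 : ℝ) 1)
    (hxe : ∀ i : Fin n, x ≠ fun j => if j = i then (1 : ℝ) else 0)
    (δ : ℝ) (hδ : 0 < δ)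
    (hroot : ∏ i, (1 + x i * δ) = δ)
    (p : Fin n → ℝ) (hp : ∀ i, p i = δ * x i / (1 + δ * x i)) :
    ∀ i, x i = p i * ∏ j ∈ Finset.univ.erase i, (1 - p j) := by
  intro i
  have hpos : ∀ j, (0:ℝ) < 1 + δ * x j := by
    intro j
    have := (hx j).1
    nlinarith [hδ.le]
  have hne : ∀ j, (1 + δ * x j) ≠ 0 := fun j => (hpos j).ne'
  have hroot' : ∏ j, (1 + δ * x j) = δ := by
    have h : ∏ j, (1 + δ * x j) = ∏ j, (1 + x j * δ) :=
      Finset.prod_congr rfl (fun j _ => by ring)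
    rw [h, hroot]
  have hprod : ∏ j ∈ Finset.univ.erase i, (1 - p j)
      = (∏ j ∈ Finset.univ.erase i, (1 + δ * x j))⁻¹ := by
    rw [← Finset.prod_inv_distrib]
    refine Finset.prod_congr rfl (fun j _ => ?_)
    rw [hp j, inv_eq_one_div, eq_div_iff (hne j), sub_mul,
      div_mul_cancel₀ _ (hne j)]
    ring
  have hsplit := Finset.mul_prod_erase Finset.univ (fun j => 1 + δ * x j) (Finset.mem_univ i)
  simp only [hroot'] at hsplit
  have herase : ∏ j ∈ Finset.univ.erase i, (1 + δ * x j) = δ / (1 + δ * x i) := by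
    rw [eq_div_iff (hne i), mul_comm]
    exact hsplit
  rw [hprod, herase, hp i]
  rw [inv_div, div_mul_div_comm, eq_div_iff (mul_ne_zero (hne i) hδ.ne')]
  ring
end

section
/- Let n ≥ 2 and p ∈ [0,1]^n. Define g(t) = ∏_{i=1}^n (1 + p_i t) − (1 + t). Then t = 0 is always a root of g; moreover if ∑_i p_i = 1 and p_i < 1 for all i, then g(t) ≥ 0 for all t ∈ (−1, ∞) with equality only at t = 0 (so 0 is the unique root of g on (−1, ∞)). -/
lemma weier_aux {n : ℕ} (p : Fin n → ℝ) (hp : ∀ i, p i ∈ Set.Icc (0 : ℝ) 1)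
    (t : ℝ) (ht : -1 < t) (s : Finset (Fin n)) :
    0 ≤ ∏ i ∈ s, (1 + p i * t) ∧
      1 + (∑ i ∈ s, p i) * t ≤ ∏ i ∈ s, (1 + p i * t) := by
  classical
  induction s using Finset.induction_on with
  | empty => simp
  | @insert a s ha ih =>
    obtain ⟨hP0, hP1⟩ := ih
    have hpa := hp a
    have h1 : 0 < 1 + p a * t := by
      nlinarith [mul_le_mul_of_nonneg_left ht.le hpa.1, hpa.1, hpa.2]
    rw [Finset.prod_insert ha, Finset.sum_insert ha]
    have hS : 0 ≤ ∑ i ∈ s, p i := Finset.sum_nonneg fun i _ => (hp i).1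
    constructor
    · exact mul_nonneg h1.le hP0
    · by_cases hc : 0 ≤ 1 + (∑ i ∈ s, p i) * t
      · have h2 := mul_le_mul_of_nonneg_left hP1 h1.le
        nlinarith [mul_nonneg (mul_nonneg hpa.1 hS) (mul_self_nonneg t)]
      · push_neg at hc
        have ht0 : t < 0 := by
          by_contra h
          push_neg at h
          nlinarith [mul_nonneg hS h]
        nlinarith [mul_nonneg h1.le hP0, mul_nonpos_of_nonneg_of_nonpos hpa.1 ht0.le]

theorem g_zero_root_and_unique (n : ℕ) (hn : 2 ≤ n) (p : Fin n → ℝ)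
    (hp : ∀ i, p i ∈ Set.Icc (0 : ℝ) 1)
    (g : ℝ → ℝ) (hg : ∀ t, g t = (∏ i, (1 + p i * t)) - (1 + t)) :
    g 0 = 0 ∧
      ((∑ i, p i = 1) → (∀ i, p i < 1) →
        ∀ t, -1 < t → (0 ≤ g t ∧ (g t = 0 → t = 0))) := by
  classical
  constructor
  · simp [hg]
  · intro hsum hlt t ht
    rcases eq_or_ne t 0 with rfl | htne
    · exact ⟨by simp [hg], fun _ => rfl⟩
    suffices h : 0 < g t by exact ⟨h.le, fun he => absurd he h.ne'⟩
    -- find two indices with positive p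
    have hex : ∃ i, 0 < p i := by
      by_contra h
      push_neg at h
      have : ∑ i, p i ≤ 0 := Finset.sum_nonpos fun i _ => h i
      linarith [hsum]
    obtain ⟨i, hi⟩ := hex
    have herase : ∑ j ∈ Finset.univ.erase i, p j = 1 - p i := by
      have h0 := Finset.add_sum_erase Finset.univ p (Finset.mem_univ i)
      rw [hsum] at h0
      linarith
    obtain ⟨j, hj, hjpos⟩ : ∃ j ∈ Finset.univ.erase i, 0 < p j := by
      by_contra h
      push_neg at h
      have : ∑ j ∈ Finset.univ.erase i, p j ≤ 0 := Finset.sum_nonpos fun k hk => h k hk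
      have hi1 := hlt i
      linarith [herase]
    set s := (Finset.univ.erase i).erase j with hs
    set S := ∑ k ∈ s, p k with hSdef
    have hSsum : p i + (p j + S) = 1 := by
      have h1 := Finset.add_sum_erase (Finset.univ.erase i) p hj
      rw [herase] at h1
      linarith
    have hS0 : 0 ≤ S := Finset.sum_nonneg fun k _ => (hp k).1
    have hsplit : ∏ k, (1 + p k * t)
        = (1 + p i * t) * ((1 + p j * t) * ∏ k ∈ s, (1 + p k * t)) := by
      rw [← Finset.mul_prod_erase _ _ (Finset.mem_univ i), ← Finset.mul_prod_erase _ _ hj]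
    obtain ⟨hP0, hP1⟩ := weier_aux p hp t ht s
    have h1i : 0 < 1 + p i * t := by
      have hpi := hp i
      nlinarith [mul_le_mul_of_nonneg_left ht.le hpi.1, hpi.1, hpi.2]
    have h1j : 0 < 1 + p j * t := by
      have hpj := hp j
      nlinarith [mul_le_mul_of_nonneg_left ht.le hpj.1, hpj.1, hpj.2]
    have h1St : 0 < 1 + S * t := by
      nlinarith [mul_le_mul_of_nonneg_left ht.le hS0]
    have ht2 : 0 < t ^ 2 := by rw [sq]; exact mul_self_pos.mpr htne
    have step1 : (1 + p i * t) * (1 + p j * t) * (1 + S * t)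
        ≤ (1 + p i * t) * (1 + p j * t) * ∏ k ∈ s, (1 + p k * t) :=
      mul_le_mul_of_nonneg_left hP1 (mul_pos h1i h1j).le
    have key : (1 + p i * t) * (1 + p j * t) * (1 + S * t) - (1 + t)
        = (p i * p j * (1 + S * t)) * t ^ 2 + ((p i + p j) * S) * t ^ 2 := by
      have hSeq : S = 1 - p i - p j := by linarith
      rw [hSeq]; ring
    have step2 : 1 + t < (1 + p i * t) * (1 + p j * t) * (1 + S * t) := by
      nlinarith [mul_pos (mul_pos (mul_pos hi hjpos) h1St) ht2,
        mul_nonneg (mul_nonneg (by linarith : (0:ℝ) ≤ p i + p j) hS0) ht2.le]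
    have step3 : 1 + t < (1 + p i * t) * ((1 + p j * t) * ∏ k ∈ s, (1 + p k * t)) := by
      rw [← mul_assoc]; linarith
    rw [hg, hsplit]
    linarith
end

section
/- For every n ≥ 2 and every x ∈ [0,1]^n, the polynomial f(δ) = ∏_{i=1}^n (1 + x_i δ) − δ has at most two roots in (0, ∞). -/
/-!
Each factor `1 + x i * δ` is nonnegative, nondecreasing and convex on `(0, ∞)`, so their product,
and hence `f`, is convex there. A convex function vanishing at `p < q < r` vanishes on all of
`[p, q]`; but `f` is a nonzero polynomial (`f 0 = 1`), so it has only finitely many zeros.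
-/

open Set Polynomial

section
variable {𝕜 : Type*} [Field 𝕜] [LinearOrder 𝕜] [IsStrictOrderedRing 𝕜] {s : Set 𝕜}

theorem MonotoneOn.finset_prod {ι : Type*} {t : Finset ι} {f : ι → 𝕜 → 𝕜}
    (hmono : ∀ i ∈ t, MonotoneOn (f i) s) (hnonneg : ∀ i ∈ t, ∀ x ∈ s, 0 ≤ f i x) :
    MonotoneOn (fun x ↦ ∏ i ∈ t, f i x) s :=
  fun _ ha _ hb hab ↦ Finset.prod_le_prod (fun i hi ↦ hnonneg i hi _ ha)
    (fun i hi ↦ hmono i hi ha hb hab)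

theorem ConvexOn.finset_prod {ι : Type*} {t : Finset ι} {f : ι → 𝕜 → 𝕜} (hs : Convex 𝕜 s)
    (hconv : ∀ i ∈ t, ConvexOn 𝕜 s (f i)) (hmono : ∀ i ∈ t, MonotoneOn (f i) s)
    (hnonneg : ∀ i ∈ t, ∀ x ∈ s, 0 ≤ f i x) :
    ConvexOn 𝕜 s (fun x ↦ ∏ i ∈ t, f i x) := by
  classical
  induction t using Finset.induction_on with
  | empty => simpa using convexOn_const 1 hs
  | insert a t ha ih =>
    simp only [Finset.forall_mem_insert] at hconv hmono hnonneg
    simp only [Finset.prod_insert ha]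
    exact hconv.1.mul (ih hconv.2 hmono.2 hnonneg.2) hnonneg.1
      (fun x hx ↦ Finset.prod_nonneg fun i hi ↦ hnonneg.2 i hi x hx)
      (hmono.1.monovaryOn (MonotoneOn.finset_prod hmono.2 hnonneg.2))

variable {β : Type*} [AddCommMonoid β] [LinearOrder β] [IsOrderedCancelAddMonoid β]
  [Module 𝕜 β] [PosSMulStrictMono 𝕜 β] {f : 𝕜 → β} {c : β} {p q r : 𝕜}

theorem ConvexOn.eqOn_Icc_of_eq_of_eq_of_eq (hf : ConvexOn 𝕜 s f) (hp : p ∈ s) (hr : r ∈ s)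
    (hpq : p < q) (hqr : q < r) (hfp : f p = c) (hfq : f q = c) (hfr : f r = c) :
    EqOn f (fun _ ↦ c) (Icc p q) := by
  intro t ht
  have hq : q ∈ s := hf.1.ordConnected.out hp hr ⟨hpq.le, hqr.le⟩
  have ht_mem : t ∈ s := hf.1.ordConnected.out hp hq ht
  refine le_antisymm ?_ ?_
  · have := hf.le_on_segment hp hq (by rwa [segment_eq_Icc hpq.le])
    rwa [hfp, hfq, max_self] at this
  · rw [← hfq]
    exact hf.le_left_of_right_le'' ht_mem hr ht.2 hqr (hfr.trans hfq.symm).le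

theorem Set.encard_le_two_of_forall_lt_not_lt {α : Type*} [LinearOrder α] {S : Set α}
    (h : ∀ a ∈ S, ∀ b ∈ S, ∀ c ∈ S, a < b → ¬b < c) : S.encard ≤ 2 := by
  by_contra! hS
  obtain ⟨t, htS, ht⟩ := exists_subset_encard_eq (Order.add_one_le_of_lt hS)
  have htfin : t.Finite := finite_of_encard_eq_coe ht
  have hcard : htfin.toFinset.card = 3 := by
    rw [← Nat.cast_inj (R := ℕ∞), ← htfin.encard_eq_coe_toFinset_card, ht]; rfl
  let e := htfin.toFinset.orderEmbOfFin hcard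
  have he : ∀ k, e k ∈ S := fun k ↦ htS (htfin.mem_toFinset.1 (Finset.orderEmbOfFin_mem _ _ k))
  exact h _ (he 0) _ (he 1) _ (he 2) (e.strictMono (by decide)) (e.strictMono (by decide))

theorem ConvexOn.encard_inter_preimage_le_two (hf : ConvexOn 𝕜 s f)
    (hfin : (s ∩ f ⁻¹' {c}).Finite) : (s ∩ f ⁻¹' {c}).encard ≤ 2 := by
  refine Set.encard_le_two_of_forall_lt_not_lt fun p hp q hq r hr hpq hqr ↦ Icc_infinite hpq
    (hfin.subset fun t ht ↦ ⟨hf.1.ordConnected.out hp.1 hq.1 ht, ?_⟩)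
  exact hf.eqOn_Icc_of_eq_of_eq_of_eq hp.1 hr.1 hpq hqr hp.2 hq.2 hr.2 ht

end

theorem finite_setOf_prod_one_add_mul_sub_eq_zero {R ι : Type*} [CommRing R] [IsDomain R]
    [Fintype ι] (x : ι → R) : {δ : R | ∏ i, (1 + x i * δ) - δ = 0}.Finite := by
  let P : R[X] := ∏ i, (1 + C (x i) * X) - X
  have hP : ∀ δ, P.eval δ = ∏ i, (1 + x i * δ) - δ := fun δ ↦ by simp [P, eval_prod]
  have hP0 : P ≠ 0 := fun h ↦ by simpa [h] using hP 0
  simpa [IsRoot, hP] using finite_setOfPred_isRoot hP0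

theorem at_most_two_positive_roots_general (n : ℕ) (x : Fin n → ℝ)
    (hx : ∀ i, x i ∈ Set.Icc (0 : ℝ) 1) :
    Set.encard {δ : ℝ | 0 < δ ∧ (∏ i, (1 + x i * δ)) - δ = 0} ≤ 2 := by
  have hx0 : ∀ i, 0 ≤ x i := fun i ↦ (hx i).1
  have hprod : ConvexOn ℝ (Ioi 0) (fun δ ↦ ∏ i, (1 + x i * δ)) :=
    ConvexOn.finset_prod (convex_Ioi 0)
      (fun i _ ↦ (convexOn_const 1 (convex_Ioi 0)).add ((convexOn_id (convex_Ioi 0)).smul (hx0 i)))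
      (fun i _ _ _ _ _ hab ↦ add_le_add_right (mul_le_mul_of_nonneg_left hab (hx0 i)) 1)
      (fun i _ δ hδ ↦ add_nonneg zero_le_one (mul_nonneg (hx0 i) (le_of_lt hδ)))
  exact (hprod.sub (concaveOn_id (convex_Ioi 0))).encard_inter_preimage_le_two
    ((finite_setOf_prod_one_add_mul_sub_eq_zero x).subset inter_subset_right)

theorem at_most_two_positive_roots (n : ℕ) (hn : 2 ≤ n) (x : Fin n → ℝ)
    (hx : ∀ i, x i ∈ Set.Icc (0 : ℝ) 1) :
    Set.encard {δ : ℝ | 0 < δ ∧ (∏ i, (1 + x i * δ)) - δ = 0} ≤ 2 :=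
  at_most_two_positive_roots_general n x hx
end

section
/- Let n ≥ 2 and suppose p, q ∈ [0,1]^n both sum to 1 and satisfy the worst-case throughput equalities for the same rate vector x, i.e., x_i = p_i ∏_{j≠i}(1-p_j) = q_i ∏_{j≠i}(1-q_j) for all i. Then p = q. -/
open Finset

private lemma fill_zero {n : ℕ} {a : Fin n → ℝ} (ha : ∀ i, a i ∈ Set.Icc (0:ℝ) 1)
    (has : ∑ i, a i = 1) {i : Fin n} (hi : a i = 1) :
    ∀ j, j ≠ i → a j = 0 := by
  have hadd := Finset.add_sum_erase univ a (mem_univ i)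
  have h1 : ∑ j ∈ univ.erase i, a j = 0 := by
    rw [has] at hadd; linarith
  intro j hj
  exact (Finset.sum_eq_zero_iff_of_nonneg (fun k _ => (ha k).1)).mp h1 j (by simp [hj])

private lemma case_one {n : ℕ} {p q : Fin n → ℝ}
    (hp : ∀ i, p i ∈ Set.Icc (0:ℝ) 1) (hq : ∀ i, q i ∈ Set.Icc (0:ℝ) 1)
    (hps : ∑ i, p i = 1) (hqs : ∑ i, q i = 1)
    (hx : ∀ i, p i * ∏ j ∈ univ.erase i, (1 - p j)
              = q i * ∏ j ∈ univ.erase i, (1 - q j))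
    {i : Fin n} (hi : p i = 1) : p = q := by
  have hp0 := fill_zero hp hps hi
  have hprod : ∏ j ∈ univ.erase i, (1 - p j) = 1 :=
    Finset.prod_eq_one (fun j hj => by rw [hp0 j (Finset.ne_of_mem_erase hj)]; ring)
  have h1 : q i * ∏ j ∈ univ.erase i, (1 - q j) = 1 := by
    have h := hx i; rw [hi, hprod] at h; linarith
  have hqprod_le : ∏ j ∈ univ.erase i, (1 - q j) ≤ 1 :=
    Finset.prod_le_one (fun j _ => by linarith [(hq j).2]) (fun j _ => by linarith [(hq j).1])
  have hqi : q i = 1 := by nlinarith [h1, hqprod_le, (hq i).1, (hq i).2]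
  have hq0 := fill_zero hq hqs hqi
  funext j
  by_cases hji : j = i
  · rw [hji, hi, hqi]
  · rw [hp0 j hji, hq0 j hji]

private lemma main_le {n : ℕ} {p q : Fin n → ℝ}
    (hp1 : ∀ i, p i < 1) (hq1 : ∀ i, q i < 1)
    (hp0 : ∀ i, 0 ≤ p i) (hq0 : ∀ i, 0 ≤ q i)
    (hx : ∀ i, p i * ∏ j ∈ univ.erase i, (1 - p j)
              = q i * ∏ j ∈ univ.erase i, (1 - q j))
    (hle : ∏ j, (1 - q j) ≤ ∏ j, (1 - p j)) :
    ∀ i, p i ≤ q i := by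
  intro i
  have hPpos : 0 < ∏ j, (1 - p j) := Finset.prod_pos (fun j _ => by linarith [hp1 j])
  have hpe : (1 - p i) * ∏ j ∈ univ.erase i, (1 - p j) = ∏ j, (1 - p j) :=
    Finset.mul_prod_erase univ (fun j => 1 - p j) (mem_univ i)
  have hqe : (1 - q i) * ∏ j ∈ univ.erase i, (1 - q j) = ∏ j, (1 - q j) :=
    Finset.mul_prod_erase univ (fun j => 1 - q j) (mem_univ i)
  have hpi : (0:ℝ) < 1 - p i := by linarith [hp1 i]
  have hqi : (0:ℝ) < 1 - q i := by linarith [hq1 i]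
  have key : p i * (∏ j, (1 - p j)) * (1 - q i)
      = q i * (∏ j, (1 - q j)) * (1 - p i) := by
    calc p i * (∏ j, (1 - p j)) * (1 - q i)
        = (p i * ∏ j ∈ univ.erase i, (1 - p j)) * ((1 - p i) * (1 - q i)) := by
          rw [← hpe]; ring
      _ = (q i * ∏ j ∈ univ.erase i, (1 - q j)) * ((1 - p i) * (1 - q i)) := by
          rw [hx i]
      _ = q i * (∏ j, (1 - q j)) * (1 - p i) := by rw [← hqe]; ring
  have h2 : q i * (∏ j, (1 - q j)) * (1 - p i) ≤ q i * (∏ j, (1 - p j)) * (1 - p i) := by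
    have := mul_le_mul_of_nonneg_left hle (hq0 i)
    nlinarith [hpi.le]
  nlinarith [key, h2, hPpos]

theorem boundary_control_unique (n : ℕ) (hn : 2 ≤ n) (p q : Fin n → ℝ)
    (hp : ∀ i, p i ∈ Set.Icc (0 : ℝ) 1) (hq : ∀ i, q i ∈ Set.Icc (0 : ℝ) 1)
    (hps : ∑ i, p i = 1) (hqs : ∑ i, q i = 1)
    (hx : ∀ i, p i * ∏ j ∈ Finset.univ.erase i, (1 - p j)
              = q i * ∏ j ∈ Finset.univ.erase i, (1 - q j)) :
    p = q := by
  by_cases hp1 : ∃ i, p i = 1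
  · obtain ⟨i, hi⟩ := hp1; exact case_one hp hq hps hqs hx hi
  by_cases hq1 : ∃ i, q i = 1
  · obtain ⟨i, hi⟩ := hq1
    exact (case_one hq hp hqs hps (fun i => (hx i).symm) hi).symm
  push_neg at hp1 hq1
  have hp1' : ∀ i, p i < 1 := fun i => lt_of_le_of_ne (hp i).2 (hp1 i)
  have hq1' : ∀ i, q i < 1 := fun i => lt_of_le_of_ne (hq i).2 (hq1 i)
  rcases le_total (∏ j, (1 - q j)) (∏ j, (1 - p j)) with h | h
  · have hle := main_le hp1' hq1' (fun i => (hp i).1) (fun i => (hq i).1) hx h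
    funext i
    exact (Finset.sum_eq_sum_iff_of_le (fun i _ => hle i)).mp
      (hps.trans hqs.symm) i (mem_univ i)
  · have hle := main_le hq1' hp1' (fun i => (hq i).1) (fun i => (hp i).1)
      (fun i => (hx i).symm) h
    funext i
    exact ((Finset.sum_eq_sum_iff_of_le (fun i _ => hle i)).mp
      (hqs.trans hps.symm) i (mem_univ i)).symm
end

section
/- The function α(n) = (n-1) / (n/(1 - 1/n)^{n-1} − 1) is strictly monotone increasing for real n ≥ 2, with α(2) = 1/3 and limit 1/e as n → ∞. -/
noncomputable def alphaFun (n : ℝ) : ℝ :=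
  (n - 1) / (n / (1 - 1 / n) ^ (n - 1) - 1)

/-!
With `q = n / (n - 1) = 1 + 1 / (n - 1)`, one has `α(n) = 1 / B(n)` where
`B(n) = q ^ n - (q - 1)` (`alphaInv`). Its derivative is `B'(n) = (q - 1)² - q ^ n (q - 1 - log q)`, and
`log q < (q - q⁻¹) / 2` gives `q - 1 - log q > (q - 1)² / (2q)`, so
`q ^ n (q - 1 - log q) > q ^ (n - 1) (q - 1)² / 2 ≥ (q - 1)²` because `q ^ (n - 1) ≥ 2` by Bernoulli.
Hence `B` decreases on `[2, ∞)`, and `B(n) = (1 + 1/(n-1)) ^ (n-1) · q - (q - 1) → e`.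
-/

open Real Set Filter Topology

theorem Real.log_lt_sub_inv_div_two {t : ℝ} (ht : 1 < t) : log t < (t - t⁻¹) / 2 := by
  rw [← sinh_log (by linarith)]
  exact self_lt_sinh_iff.2 (log_pos ht)

noncomputable def alphaInv (n : ℝ) : ℝ := (n / (n - 1)) ^ n - 1 / (n - 1)

section

variable {n : ℝ}

lemma div_sub_one_eq_one_add (hn : n ≠ 1) : n / (n - 1) = 1 + 1 / (n - 1) := by
  have : n - 1 ≠ 0 := sub_ne_zero.2 hn
  field_simp
  ring

lemma one_lt_div_sub_one (hn : 1 < n) : 1 < n / (n - 1) :=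
  (one_lt_div (sub_pos.2 hn)).2 (by linarith)

lemma two_le_div_sub_one_rpow (hn : 2 ≤ n) : 2 ≤ (n / (n - 1)) ^ (n - 1) := by
  have h := one_add_mul_self_le_rpow_one_add (s := 1 / (n - 1))
    (by have := one_div_pos.2 (show 0 < n - 1 by linarith); linarith) (p := n - 1)
    (by linarith)
  rw [mul_one_div_cancel (by linarith), ← div_sub_one_eq_one_add (by linarith)] at h
  linarith

lemma alphaInv_pos (hn : 1 < n) : 0 < alphaInv n := by
  have hx : 0 < 1 / (n - 1) := one_div_pos.2 (sub_pos.2 hn)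
  have h := one_add_mul_self_le_rpow_one_add (s := 1 / (n - 1)) (by linarith) (p := n) hn.le
  rw [← div_sub_one_eq_one_add hn.ne'] at h
  unfold alphaInv
  nlinarith

lemma alphaFun_eq_inv_alphaInv (hn : 1 < n) : alphaFun n = (alphaInv n)⁻¹ := by
  have h1 : n - 1 ≠ 0 := sub_ne_zero.2 hn.ne'
  have hq : 0 < n / (n - 1) := by linarith [one_lt_div_sub_one hn]
  have hq' : 1 - 1 / n = (n / (n - 1))⁻¹ := by field_simp
  have hden : n / (1 - 1 / n) ^ (n - 1) - 1 = (n - 1) * alphaInv n := by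
    rw [hq', inv_rpow hq.le, div_inv_eq_mul, rpow_sub_one hq.ne', alphaInv]
    field_simp
  rw [alphaFun, hden, div_mul_eq_div_div, div_self h1, one_div]

lemma hasDerivAt_alphaInv (hn : 1 < n) :
    HasDerivAt alphaInv
      ((1 / (n - 1)) ^ 2 - (n / (n - 1)) ^ n * (1 / (n - 1) - log (n / (n - 1)))) n := by
  have h1 : n - 1 ≠ 0 := sub_ne_zero.2 hn.ne'
  have hq : 0 < n / (n - 1) := by linarith [one_lt_div_sub_one hn]
  have hdiv : HasDerivAt (fun x : ℝ => x / (x - 1)) (-(1 / (n - 1) ^ 2)) n := by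
    refine ((hasDerivAt_id n).fun_div ((hasDerivAt_id n).sub_const 1) h1).congr_deriv ?_
    simp only [id_eq]
    field_simp
    ring
  have hinv : HasDerivAt (fun x : ℝ => 1 / (x - 1)) (-(1 / (n - 1) ^ 2)) n := by
    simpa [one_div, neg_div] using ((hasDerivAt_id n).sub_const 1).fun_inv h1
  refine ((hdiv.rpow (hasDerivAt_id n) hq).fun_sub hinv).congr_deriv ?_
  simp only [id_eq, one_mul]
  rw [rpow_sub_one hq.ne']
  field_simp
  ring

lemma deriv_alphaInv_neg (hn : 2 ≤ n) : deriv alphaInv n < 0 := by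
  rw [(hasDerivAt_alphaInv (by linarith)).deriv]
  have hx : 1 / (n - 1) = n / (n - 1) - 1 := by
    rw [div_sub_one_eq_one_add (by linarith)]; ring
  have h2 := two_le_div_sub_one_rpow hn
  have hq1 := one_lt_div_sub_one (show 1 < n by linarith)
  rw [hx, sub_neg]
  set q := n / (n - 1)
  have hq0 : 0 < q := by linarith
  have hgap : (q - 1) ^ 2 / (2 * q) < q - 1 - log q := by
    have : (q - 1) ^ 2 / (2 * q) = q - 1 - (q - q⁻¹) / 2 := by field_simp; ring
    linarith [log_lt_sub_inv_div_two hq1]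
  calc (q - 1) ^ 2 ≤ q ^ (n - 1) * (q - 1) ^ 2 / 2 := by nlinarith
    _ = q ^ n * ((q - 1) ^ 2 / (2 * q)) := by rw [rpow_sub_one hq0.ne']; field_simp
    _ < q ^ n * (q - 1 - log q) := mul_lt_mul_of_pos_left hgap (rpow_pos_of_pos hq0 n)

end

lemma strictAntiOn_alphaInv : StrictAntiOn alphaInv (Ici 2) := by
  refine strictAntiOn_of_deriv_neg (convex_Ici 2) (fun x hx => ?_) (fun x hx => ?_)
  · exact (hasDerivAt_alphaInv (by linarith [mem_Ici.1 hx])).continuousAt.continuousWithinAt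
  · rw [interior_Ici, mem_Ioi] at hx
    exact deriv_alphaInv_neg hx.le

lemma tendsto_alphaInv_atTop : Tendsto alphaInv atTop (𝓝 (exp 1)) := by
  have hm : Tendsto (fun n : ℝ => n - 1) atTop atTop :=
    tendsto_atTop_add_const_right _ (-1) tendsto_id
  have hx : Tendsto (fun n : ℝ => 1 / (n - 1)) atTop (𝓝 0) := by
    simpa only [one_div, Function.comp_def] using tendsto_inv_atTop_zero.comp hm
  have he : Tendsto (fun n : ℝ => (1 + 1 / (n - 1)) ^ (n - 1)) atTop (𝓝 (exp 1)) := by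
    simpa only [one_div, Function.comp_def] using (tendsto_one_add_div_rpow_exp 1).comp hm
  have hlim := (he.mul (hx.const_add 1)).sub hx
  rw [add_zero, mul_one, sub_zero] at hlim
  refine hlim.congr' ?_
  filter_upwards [eventually_gt_atTop 1] with n hn
  have hq : n / (n - 1) ≠ 0 := by linarith [one_lt_div_sub_one hn]
  rw [alphaInv, ← div_sub_one_eq_one_add hn.ne', ← rpow_add_one hq, sub_add_cancel]

theorem alpha_strictMono_and_limits :
    StrictMonoOn alphaFun (Set.Ici (2 : ℝ)) ∧
      alphaFun 2 = 1 / 3 ∧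
      Filter.Tendsto alphaFun Filter.atTop (nhds (1 / Real.exp 1)) := by
  refine ⟨fun a ha b hb hab => ?_, by norm_num [alphaFun], ?_⟩
  · have ha' : 1 < a := by linarith [mem_Ici.1 ha]
    have hb' : 1 < b := by linarith [mem_Ici.1 hb]
    rw [alphaFun_eq_inv_alphaInv ha', alphaFun_eq_inv_alphaInv hb']
    exact inv_strictAnti₀ (alphaInv_pos hb') (strictAntiOn_alphaInv ha hb hab)
  · rw [one_div]
    refine (tendsto_alphaInv_atTop.inv₀ (exp_ne_zero 1)).congr' ?_
    filter_upwards [eventually_gt_atTop 1] with n hn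
    rw [alphaFun_eq_inv_alphaInv hn]
end

section
/- For real n ≥ 2, the function g(n) = n m(n)(1 − m(n)), where m(n) = (1/n)(1 − 1/n)^{n−1}, is monotone decreasing for n ≥ 3. -/
/-!
Write `x = 1 / n` and `p = (1 - x) ^ (n - 1)`, so that `n m = p` and `g = p (1 - x p)`.
Since `p' = p (log (1 - x) + x)`, one gets `g' = p (p x² + (log (1 - x) + x) (1 - 2 x p))`.
For `n ≥ 3` we have `x ≤ 1/3`, and `p ≤ p(3) = 4/9` because `log (1 - x) + x ≤ 0` makes `p`
decreasing; truncating `-log (1 - x) = ∑ xᵏ / k` after four terms then shows `g' ≤ 0`.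
-/

noncomputable def mFun (n : ℝ) : ℝ := (1 / n) * (1 - 1 / n) ^ (n - 1)

open Real Set

/-- The probability that the other `n - 1` stations are silent when each transmits with
probability `1 / n`; thus `mFun n = silentProb n / n`. -/
noncomputable def silentProb (n : ℝ) : ℝ := (1 - 1 / n) ^ (n - 1)

lemma one_sub_one_div_pos {n : ℝ} (hn : 1 < n) : 0 < 1 - 1 / n := by
  rw [sub_pos, div_lt_one (by linarith)]
  exact hn

lemma silentProb_pos {n : ℝ} (hn : 1 < n) : 0 < silentProb n :=
  rpow_pos_of_pos (one_sub_one_div_pos hn) _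

lemma hasDerivAt_silentProb {n : ℝ} (hn : 1 < n) :
    HasDerivAt silentProb (silentProb n * (log (1 - 1 / n) + 1 / n)) n := by
  have hb := one_sub_one_div_pos hn
  have hbase : HasDerivAt (fun n : ℝ => 1 - 1 / n) (1 / n ^ 2) n := by
    simpa using (hasDerivAt_inv (by positivity : n ≠ 0)).const_sub 1
  refine (hbase.rpow ((hasDerivAt_id' n).sub_const 1) hb).congr_deriv ?_
  have hn1 : n - 1 ≠ 0 := by linarith
  rw [rpow_sub_one hb.ne', silentProb]
  field_simp
  ring

lemma log_one_sub_add_nonpos {x : ℝ} (hx : x < 1) : log (1 - x) + x ≤ 0 := by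
  linarith [log_le_sub_one_of_pos (by linarith : 0 < 1 - x)]

lemma silentProb_antitoneOn : AntitoneOn silentProb (Ioi 1) := by
  refine antitoneOn_of_deriv_nonpos (convex_Ioi 1)
    (fun n hn => (hasDerivAt_silentProb hn).continuousAt.continuousWithinAt) ?_ ?_ <;>
    rw [interior_Ioi]
  · exact fun n hn => (hasDerivAt_silentProb hn).differentiableAt.differentiableWithinAt
  · intro n hn
    rw [(hasDerivAt_silentProb hn).deriv]
    have hx : 1 / n < 1 := by rw [div_lt_one (by linarith [mem_Ioi.1 hn])]; exact hn
    exact mul_nonpos_of_nonneg_of_nonpos (silentProb_pos hn).le (log_one_sub_add_nonpos hx)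

lemma silentProb_three : silentProb 3 = 4 / 9 := by
  rw [silentProb, show (3 : ℝ) - 1 = (2 : ℕ) by norm_num, rpow_natCast]
  norm_num

lemma silentProb_le_four_ninths {n : ℝ} (hn : 3 ≤ n) : silentProb n ≤ 4 / 9 :=
  silentProb_three ▸ silentProb_antitoneOn (by norm_num : (3 : ℝ) ∈ Ioi 1)
    (by simp only [mem_Ioi]; linarith) hn

lemma partial_sum_le_neg_log_one_sub {x : ℝ} (hx0 : 0 ≤ x) (hx1 : x < 1) :
    x + x ^ 2 / 2 + x ^ 3 / 3 + x ^ 4 / 4 ≤ -log (1 - x) := by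
  have hsum := hasSum_pow_div_log_of_abs_lt_one (by rwa [abs_of_nonneg hx0])
  have := sum_le_hasSum (Finset.range 4) (fun i _ => by positivity) hsum
  norm_num [Finset.sum_range_succ] at this
  linarith

lemma hasDerivAt_g {n : ℝ} (hn : 1 < n) :
    HasDerivAt (fun n : ℝ => n * mFun n * (1 - mFun n))
      (silentProb n * (silentProb n * (1 / n) ^ 2
        + (log (1 - 1 / n) + 1 / n) * (1 - 2 * silentProb n * (1 / n)))) n := by
  have hinv : HasDerivAt (fun n : ℝ => 1 / n) (-(n ^ 2)⁻¹) n := by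
    simpa using hasDerivAt_inv (by positivity : n ≠ 0)
  have hm : HasDerivAt mFun
      (-(n ^ 2)⁻¹ * silentProb n + 1 / n * (silentProb n * (log (1 - 1 / n) + 1 / n))) n :=
    hinv.mul (hasDerivAt_silentProb hn)
  refine (((hasDerivAt_id' n).mul hm).mul (hm.const_sub 1)).congr_deriv ?_
  rw [Pi.mul_apply, show mFun n = 1 / n * silentProb n from rfl]
  field_simp
  ring

/-- The second factor of `g'` in the variables `x = 1 / n`, `p = silentProb n`,
`L = log (1 - x)`. The margin at `x = 1/3` is tight: three terms of the series in `hL`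
would not suffice. -/
lemma deriv_factor_nonpos {x p L : ℝ} (hx0 : 0 < x) (hx3 : x ≤ 1 / 3) (hp4 : p ≤ 4 / 9)
    (hL : x + x ^ 2 / 2 + x ^ 3 / 3 + x ^ 4 / 4 ≤ -L) :
    p * x ^ 2 + (L + x) * (1 - 2 * p * x) ≤ 0 := by
  set S := 1 / 2 + x / 3 + x ^ 2 / 4 with hS_def
  have hLx : L + x ≤ -(x ^ 2 * S) := by rw [hS_def]; linarith
  have hS : p * (1 + 2 * x * S) ≤ S := by
    have h49 : 4 / 9 * (1 + 2 * x * S) ≤ S := by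
      rw [hS_def]
      nlinarith [mul_nonneg hx0.le (sub_nonneg.2 hx3), mul_nonneg (sq_nonneg x) (sub_nonneg.2 hx3)]
    nlinarith [mul_le_mul_of_nonneg_right hp4 (by positivity : 0 ≤ 1 + 2 * x * S)]
  have hpx : 0 < 1 - 2 * p * x := by nlinarith
  calc p * x ^ 2 + (L + x) * (1 - 2 * p * x)
      ≤ p * x ^ 2 - x ^ 2 * S * (1 - 2 * p * x) := by
        nlinarith [mul_le_mul_of_nonneg_right hLx hpx.le]
    _ = x ^ 2 * (p * (1 + 2 * x * S) - S) := by ring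
    _ ≤ 0 := mul_nonpos_of_nonneg_of_nonpos (by positivity) (by linarith)

theorem g_antitone :
    AntitoneOn (fun n : ℝ => n * mFun n * (1 - mFun n)) (Set.Ici (3 : ℝ)) := by
  have hgt {n : ℝ} (hn : 3 ≤ n) : 1 < n := by linarith
  refine antitoneOn_of_deriv_nonpos (convex_Ici 3)
    (fun n hn => (hasDerivAt_g (hgt hn)).continuousAt.continuousWithinAt) ?_ ?_ <;>
    rw [interior_Ici]
  · exact fun n hn => (hasDerivAt_g (hgt hn.le)).differentiableAt.differentiableWithinAt
  · intro n hn
    have hn3 : 3 ≤ n := le_of_lt hn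
    rw [(hasDerivAt_g (hgt hn3)).deriv]
    have hx3 : 1 / n ≤ 1 / 3 := one_div_le_one_div_of_le (by norm_num) hn3
    exact mul_nonpos_of_nonneg_of_nonpos (silentProb_pos (hgt hn3)).le
      (deriv_factor_nonpos (by positivity) hx3 (silentProb_le_four_ninths hn3)
        (partial_sum_le_neg_log_one_sub (by positivity) (by linarith)))
end

section
/- For every n ≥ 2 and every p ∈ [0,1]^n, letting x_i = p_i ∏_{j≠i}(1 − p_j), it holds that ∑_{i=1}^n (1 − x_i)^2 ≥ n − 1. -/
open Finset

private lemma key_ineq {ι : Type*} [DecidableEq ι] (p : ι → ℝ)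
    (hp0 : ∀ i, 0 ≤ p i) (hp1 : ∀ i, p i ≤ 1) (s : Finset ι) :
    (∏ i ∈ s, (1 - p i)) + (∑ i ∈ s, p i * ∏ j ∈ s.erase i, (1 - p j))
      + (1/2) * (∑ i ∈ s, ∑ j ∈ s.erase i,
          p i * p j * ∏ k ∈ (s.erase i).erase j, (1 - p k)) ≤ 1 := by
  induction s using Finset.induction with
  | empty => simp
  | @insert a s ha ih =>
    set P := ∏ i ∈ s, (1 - p i) with hP
    set S := ∑ i ∈ s, p i * ∏ j ∈ s.erase i, (1 - p j) with hS
    set T := ∑ i ∈ s, ∑ j ∈ s.erase i,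
        p i * p j * ∏ k ∈ (s.erase i).erase j, (1 - p k) with hT
    have hTnn : 0 ≤ T := by
      apply Finset.sum_nonneg; intro i hi
      apply Finset.sum_nonneg; intro j hj
      exact mul_nonneg (mul_nonneg (hp0 i) (hp0 j))
        (Finset.prod_nonneg fun k _ => by linarith [hp1 k])
    have hP' : ∏ i ∈ insert a s, (1 - p i) = (1 - p a) * P :=
      Finset.prod_insert ha
    have hS' : (∑ i ∈ insert a s, p i * ∏ j ∈ (insert a s).erase i, (1 - p j))
        = p a * P + (1 - p a) * S := by
      rw [Finset.sum_insert ha, Finset.erase_insert ha]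
      congr 1
      rw [Finset.mul_sum]
      apply Finset.sum_congr rfl
      intro i hi
      have hia : i ≠ a := fun h => ha (h ▸ hi)
      rw [Finset.erase_insert_of_ne hia.symm,
        Finset.prod_insert (fun h => ha (Finset.mem_of_mem_erase h))]
      ring
    have hT' : (∑ i ∈ insert a s, ∑ j ∈ (insert a s).erase i,
          p i * p j * ∏ k ∈ ((insert a s).erase i).erase j, (1 - p k))
        = 2 * (p a * S) + (1 - p a) * T := by
      rw [Finset.sum_insert ha, Finset.erase_insert ha]
      have h1 : (∑ j ∈ s, p a * p j * ∏ k ∈ s.erase j, (1 - p k)) = p a * S := by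
        rw [Finset.mul_sum]; apply Finset.sum_congr rfl; intro j hj; ring
      have h2 : (∑ i ∈ s, ∑ j ∈ (insert a s).erase i,
            p i * p j * ∏ k ∈ ((insert a s).erase i).erase j, (1 - p k))
          = p a * S + (1 - p a) * T := by
        have : ∀ i ∈ s, (∑ j ∈ (insert a s).erase i,
              p i * p j * ∏ k ∈ ((insert a s).erase i).erase j, (1 - p k))
            = p a * (p i * ∏ j ∈ s.erase i, (1 - p j))
              + (1 - p a) * ∑ j ∈ s.erase i,
                  p i * p j * ∏ k ∈ (s.erase i).erase j, (1 - p k) := by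
          intro i hi
          have hia : i ≠ a := fun h => ha (h ▸ hi)
          have hanotin : a ∉ s.erase i := fun h => ha (Finset.mem_of_mem_erase h)
          rw [Finset.erase_insert_of_ne hia.symm, Finset.sum_insert hanotin,
            Finset.erase_insert hanotin]
          congr 1
          · ring
          · rw [Finset.mul_sum]
            apply Finset.sum_congr rfl
            intro j hj
            have hja : j ≠ a := fun h => hanotin (h ▸ hj)
            rw [Finset.erase_insert_of_ne hja.symm,
              Finset.prod_insert (fun h => hanotin (Finset.mem_of_mem_erase h))]
            ring
        rw [Finset.sum_congr rfl this, Finset.sum_add_distrib, ← Finset.mul_sum,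
          ← Finset.mul_sum]
      rw [h1, h2]; ring
    rw [hP', hS', hT']
    have hpa0 := hp0 a
    have hpa1 := hp1 a
    have hprod : 0 ≤ p a * T := mul_nonneg hpa0 hTnn
    nlinarith [ih]

theorem rate_surface_outside_ball (n : ℕ) (hn : 2 ≤ n) (p : Fin n → ℝ)
    (hp : ∀ i, p i ∈ Set.Icc (0 : ℝ) 1) :
    (n : ℝ) - 1 ≤
      ∑ i, (1 - p i * ∏ j ∈ Finset.univ.erase i, (1 - p j)) ^ 2 := by
  have hp0 : ∀ i, 0 ≤ p i := fun i => (hp i).1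
  have hp1 : ∀ i, p i ≤ 1 := fun i => (hp i).2
  have hq0 : ∀ i, (0:ℝ) ≤ 1 - p i := fun i => by linarith [hp1 i]
  set x : Fin n → ℝ := fun i => p i * ∏ j ∈ Finset.univ.erase i, (1 - p j) with hx
  set P : ℝ := ∏ i, (1 - p i) with hPdef
  set S : ℝ := ∑ i, x i with hSdef
  set Q : ℝ := ∑ i, (x i)^2 with hQdef
  set T : ℝ := ∑ i, ∑ j ∈ Finset.univ.erase i,
      p i * p j * ∏ k ∈ (Finset.univ.erase i).erase j, (1 - p k) with hTdef
  have key := key_ineq p hp0 hp1 Finset.univ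
  have hPnn : 0 ≤ P := Finset.prod_nonneg fun i _ => hq0 i
  have hTnn : 0 ≤ T := by
    apply Finset.sum_nonneg; intro i _
    apply Finset.sum_nonneg; intro j _
    exact mul_nonneg (mul_nonneg (hp0 i) (hp0 j))
      (Finset.prod_nonneg fun k _ => hq0 k)
  -- x i * x j = P * (p i * p j * ∏ ...)
  have hxx : ∀ i : Fin n, ∀ j ∈ Finset.univ.erase i,
      x i * x j = P * (p i * p j * ∏ k ∈ (Finset.univ.erase i).erase j, (1 - p k)) := by
    intro i j hj
    have hji : j ≠ i := Finset.ne_of_mem_erase hj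
    have hjmem : j ∈ Finset.univ.erase i := hj
    have himem : i ∈ Finset.univ.erase j := Finset.mem_erase.2 ⟨hji.symm, Finset.mem_univ i⟩
    have e1 : (1 - p j) * ∏ k ∈ (Finset.univ.erase i).erase j, (1 - p k)
        = ∏ k ∈ Finset.univ.erase i, (1 - p k) :=
      Finset.mul_prod_erase _ (fun k => 1 - p k) hjmem
    have e2 : (1 - p i) * ∏ k ∈ (Finset.univ.erase j).erase i, (1 - p k)
        = ∏ k ∈ Finset.univ.erase j, (1 - p k) :=
      Finset.mul_prod_erase _ (fun k => 1 - p k) himem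
    have e3 : (1 - p i) * ∏ k ∈ Finset.univ.erase i, (1 - p k) = P :=
      Finset.mul_prod_erase _ (fun k => 1 - p k) (Finset.mem_univ i)
    have ecomm : (Finset.univ.erase j).erase i = (Finset.univ.erase i).erase j :=
      Finset.erase_right_comm
    rw [ecomm] at e2
    show (p i * ∏ k ∈ Finset.univ.erase i, (1 - p k))
        * (p j * ∏ k ∈ Finset.univ.erase j, (1 - p k)) = _
    rw [← e1, ← e2, ← e3, ← e1]
    ring
  have hS2 : S^2 = Q + P * T := by
    have step1 : S^2 = ∑ i, x i * S := by
      rw [← Finset.sum_mul, ← hSdef, sq]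
    have step2 : ∀ i : Fin n, x i * S = (x i)^2 + ∑ j ∈ Finset.univ.erase i, x i * x j := by
      intro i
      have : S = x i + ∑ j ∈ Finset.univ.erase i, x j :=
        (Finset.add_sum_erase _ _ (Finset.mem_univ i)).symm
      rw [this, mul_add, Finset.mul_sum, sq]
    rw [step1]
    rw [Finset.sum_congr rfl (fun i _ => step2 i), Finset.sum_add_distrib]
    congr 1
    rw [hTdef, Finset.mul_sum]
    apply Finset.sum_congr rfl
    intro i _
    rw [Finset.mul_sum]
    exact Finset.sum_congr rfl fun j hj => hxx i j hj
  have hexp : (∑ i, (1 - x i)^2) = (n:ℝ) - 2*S + Q := by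
    have : ∀ i : Fin n, (1 - x i)^2 = 1 - 2 * x i + (x i)^2 := fun i => by ring
    rw [Finset.sum_congr rfl (fun i _ => this i), Finset.sum_add_distrib,
      Finset.sum_sub_distrib, ← Finset.mul_sum, ← hSdef, ← hQdef]
    simp [Finset.card_univ]
  have goal2 : (n:ℝ) - 1 ≤ (n:ℝ) - 2*S + Q := by
    have hQ : Q = S^2 - P * T := by linarith [hS2]
    -- (1 - S)^2 ≥ (P + T/2)^2 ≥ P*T
    have h1S : P + T/2 ≤ 1 - S := by linarith [key]
    have hnn : (0:ℝ) ≤ P + T/2 := by linarith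
    have hsq : (P + T/2)^2 ≤ (1 - S)^2 := by nlinarith
    nlinarith [sq_nonneg P, sq_nonneg T]
  calc (n:ℝ) - 1 ≤ (n:ℝ) - 2*S + Q := goal2
    _ = ∑ i, (1 - x i)^2 := hexp.symm
end

section
/- Fix t ∈ (0,1] and integer k with 1 ≤ k ≤ n. Then t(1−t)^{k−1} ≤ 1 − √(1 − 1/k), with equality if and only if k = 1 and t = 1. -/
/-!
For `k = m + 1 ≥ 2`, the maximum of `t (1 - t) ^ m` on `[0, 1]` is `m ^ m / (m + 1) ^ (m + 1)`,
attained at `t = 1 / k`. Bernoulli's inequality `(1 + 1/m) ^ m ≥ 2` bounds it by `1 / (2k)`, and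
`1 - √(1 - x) = x / (1 + √(1 - x)) > x / 2` for `x = 1 / k ∈ (0, 1]`. So the inequality is strict
for `k ≥ 2`, while for `k = 1` it reads `t ≤ 1`.
-/

open Real

theorem mul_one_sub_pow_le (m : ℕ) {t : ℝ} (ht : t ≤ 1) :
    t * (1 - t) ^ m ≤ (m : ℝ) ^ m / (m + 1) ^ (m + 1) := by
  rcases m.eq_zero_or_pos with rfl | hm
  · simpa using ht
  have hm' : (0 : ℝ) < m := by exact_mod_cast hm
  set c : ℝ := m / (m + 1) with hc
  have hc0 : 0 ≤ c := by positivity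
  -- Bernoulli: the tangent line of `x ↦ x ^ (m + 1)` at `1 - t` lies below it at `c`.
  have tangent := pow_add_mul_le_add_pow (a := 1 - t) (b := c - (1 - t)) (by linarith)
    (by linarith) (m + 1)
  have key : m * (t * (1 - t) ^ m) ≤ c ^ (m + 1) := by
    calc (m : ℝ) * (t * (1 - t) ^ m)
        = (1 - t) ^ (m + 1) + ↑(m + 1) * (1 - t) ^ (m + 1 - 1) * (c - (1 - t)) := by
          rw [hc, Nat.add_sub_cancel]; push_cast; field_simp; ring
      _ ≤ c ^ (m + 1) := by rwa [add_sub_cancel] at tangent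
  rw [hc, div_pow, pow_succ _ m, mul_comm, mul_div_right_comm] at key
  exact le_of_mul_le_mul_right key hm'

theorem two_mul_pow_self_le_succ_pow {m : ℕ} (hm : 0 < m) : 2 * m ^ m ≤ (m + 1) ^ m := by
  have := pow_add_mul_le_add_pow (a := m) (b := 1) (by positivity) (by positivity) m
  rwa [Nat.cast_id, mul_one, ← pow_succ', Nat.sub_add_cancel hm, ← two_mul] at this

theorem half_lt_one_sub_sqrt_one_sub {x : ℝ} (hx0 : 0 < x) (hx2 : x < 2) :
    x / 2 < 1 - √(1 - x) := by
  have : √(1 - x) < 1 - x / 2 := (sqrt_lt' (by linarith)).2 (by nlinarith)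
  linarith

theorem mul_one_sub_pow_lt_one_sub_sqrt {m : ℕ} (hm : 0 < m) {t : ℝ} (ht : t ≤ 1) :
    t * (1 - t) ^ m < 1 - √(1 - 1 / (m + 1)) := by
  have hm1 : (1 : ℝ) < m + 1 := by norm_cast; omega
  have hpow : (2 : ℝ) * m ^ m ≤ (m + 1) ^ m := by exact_mod_cast two_mul_pow_self_le_succ_pow hm
  calc t * (1 - t) ^ m ≤ (m : ℝ) ^ m / (m + 1) ^ (m + 1) := mul_one_sub_pow_le m ht
    _ ≤ 1 / (m + 1) / 2 := by
      rw [div_div, div_le_div_iff₀ (by positivity) (by positivity), pow_succ]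
      nlinarith
    _ < 1 - √(1 - 1 / (m + 1)) :=
      half_lt_one_sub_sqrt_one_sub (by positivity)
        (((div_lt_one (by positivity)).2 hm1).trans one_lt_two)

theorem quasi_uniform_ineq_general (t : ℝ) (ht : t ∈ Set.Ioc (0 : ℝ) 1)
    (k : ℕ) (hk1 : 1 ≤ k) :
    t * (1 - t) ^ (k - 1) ≤ 1 - Real.sqrt (1 - 1 / k) ∧
      (t * (1 - t) ^ (k - 1) = 1 - Real.sqrt (1 - 1 / k) ↔ k = 1 ∧ t = 1) := by
  obtain ⟨m, rfl⟩ : ∃ m, k = m + 1 := ⟨k - 1, by omega⟩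
  simp only [Nat.add_sub_cancel, Nat.cast_succ, Nat.add_eq_right]
  rcases m.eq_zero_or_pos with rfl | hm
  · simpa using ht.2
  · have hlt := mul_one_sub_pow_lt_one_sub_sqrt hm ht.2
    exact ⟨hlt.le, iff_of_false hlt.ne fun h => hm.ne' h.1⟩

theorem quasi_uniform_ineq (t : ℝ) (ht : t ∈ Set.Ioc (0 : ℝ) 1)
    (k n : ℕ) (hk1 : 1 ≤ k) (hkn : k ≤ n) :
    t * (1 - t) ^ (k - 1) ≤ 1 - Real.sqrt (1 - 1 / k) ∧
      (t * (1 - t) ^ (k - 1) = 1 - Real.sqrt (1 - 1 / k) ↔ k = 1 ∧ t = 1) :=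
  quasi_uniform_ineq_general t ht k hk1
end

section
/- For n ≥ 2 and x ∈ ℝ_{≥0}^n, the set P(x) = {p ∈ (0,1)^n : x_i ≤ p_i ∏_{j≠i}(1 − p_j) for all i} is convex. -/
theorem stabilizing_controls_convex (n : ℕ) (hn : 2 ≤ n) (x : Fin n → ℝ)
    (hx : ∀ i, 0 ≤ x i) :
    Convex ℝ {p : Fin n → ℝ |
      (∀ i, p i ∈ Set.Ioo (0 : ℝ) 1) ∧
      ∀ i, x i ≤ p i * ∏ j ∈ Finset.univ.erase i, (1 - p j)} := by
  rintro p hp q hq a b ha hb hab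
  rcases ha.lt_or_eq with hapos | rfl
  swap
  · have hb1 : b = 1 := by linarith
    subst hb1
    simpa using hq
  rcases hb.lt_or_eq with hbpos | rfl
  swap
  · have ha1 : a = 1 := by linarith
    subst ha1
    simpa using hp
  have hu : ∀ j, 0 < 1 - p j := fun j => by linarith [(hp.1 j).2]
  have hv : ∀ j, 0 < 1 - q j := fun j => by linarith [(hq.1 j).2]
  constructor
  · intro i
    have h1 := hp.1 i
    have h2 := hq.1 i
    simp only [Pi.add_apply, Pi.smul_apply, smul_eq_mul, Set.mem_Ioo]
    constructor
    · nlinarith [mul_pos hapos h1.1, mul_pos hbpos h2.1]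
    · nlinarith [h1.1, h1.2, h2.1, h2.2]
  · intro i
    have hA := hp.2 i
    have hB := hq.2 i
    have hApos : 0 < p i * ∏ j ∈ Finset.univ.erase i, (1 - p j) :=
      mul_pos (hp.1 i).1 (Finset.prod_pos fun j _ => hu j)
    have hBpos : 0 < q i * ∏ j ∈ Finset.univ.erase i, (1 - q j) :=
      mul_pos (hq.1 i).1 (Finset.prod_pos fun j _ => hv j)
    have step1 : x i = x i ^ a * x i ^ b := by
      rw [← Real.rpow_add' (hx i) (by rw [hab]; norm_num), hab, Real.rpow_one]
    have step2 : x i ^ a * x i ^ b ≤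
        (p i * ∏ j ∈ Finset.univ.erase i, (1 - p j)) ^ a *
        (q i * ∏ j ∈ Finset.univ.erase i, (1 - q j)) ^ b :=
      mul_le_mul (Real.rpow_le_rpow (hx i) hA ha) (Real.rpow_le_rpow (hx i) hB hb)
        (Real.rpow_nonneg (hx i) b) (Real.rpow_nonneg hApos.le a)
    have hre : (p i * ∏ j ∈ Finset.univ.erase i, (1 - p j)) ^ a *
        (q i * ∏ j ∈ Finset.univ.erase i, (1 - q j)) ^ b =
        (p i ^ a * q i ^ b) *
        ∏ j ∈ Finset.univ.erase i, ((1 - p j) ^ a * (1 - q j) ^ b) := by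
      rw [Real.mul_rpow (hp.1 i).1.le (Finset.prod_nonneg fun j _ => (hu j).le),
        Real.mul_rpow (hq.1 i).1.le (Finset.prod_nonneg fun j _ => (hv j).le),
        ← Real.finset_prod_rpow _ _ (fun j _ => (hu j).le),
        ← Real.finset_prod_rpow _ _ (fun j _ => (hv j).le), Finset.prod_mul_distrib]
      ring
    have step3 : (p i ^ a * q i ^ b) *
        (∏ j ∈ Finset.univ.erase i, ((1 - p j) ^ a * (1 - q j) ^ b)) ≤
        (a * p i + b * q i) *
        ∏ j ∈ Finset.univ.erase i, (a * (1 - p j) + b * (1 - q j)) := by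
      apply mul_le_mul
      · exact Real.geom_mean_le_arith_mean2_weighted ha hb (hp.1 i).1.le (hq.1 i).1.le hab
      · apply Finset.prod_le_prod
        · intro j _
          exact mul_nonneg (Real.rpow_nonneg (hu j).le a) (Real.rpow_nonneg (hv j).le b)
        · intro j _
          exact Real.geom_mean_le_arith_mean2_weighted ha hb (hu j).le (hv j).le hab
      · exact Finset.prod_nonneg fun j _ =>
          mul_nonneg (Real.rpow_nonneg (hu j).le a) (Real.rpow_nonneg (hv j).le b)
      · have h1 := mul_pos hapos (hp.1 i).1
        have h2 := mul_pos hbpos (hq.1 i).1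
        linarith
    have hgoal : (a • p + b • q) i * ∏ j ∈ Finset.univ.erase i, (1 - (a • p + b • q) j) =
        (a * p i + b * q i) *
        ∏ j ∈ Finset.univ.erase i, (a * (1 - p j) + b * (1 - q j)) := by
      simp only [Pi.add_apply, Pi.smul_apply, smul_eq_mul]
      congr 1
      apply Finset.prod_congr rfl
      intro j _
      nlinarith [hab]
    rw [hgoal]
    calc x i = x i ^ a * x i ^ b := step1
      _ ≤ _ := step2
      _ = _ := hre
      _ ≤ _ := step3
end
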